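/- arXiv:2107.12487 — 6 statements merged into one kernel-verified Lean document; each statement's English description precedes it below -/
import Mathlib

section
/- If p(w|X) = P(W = w | X) is the generalized propensity score, then the treatment indicator D(w) = 1{W = w} is conditionally independent of the covariate vector X given p(w|X); equivalently, P(W = w | X, p(w|X)) = p(w|X), i.e., E[D(w) | X] = E[D(w) | p(w|X)] almost surely. -/
open MeasureTheory ProbabilityTheory

/-- Conditional independence of `A` and `B` given `Z`: for all bounded measurable
real-valued `f, g`, `E[f(A) g(B) | σ(Z)] = E[f(A)|σ(Z)] · E[g(B)|σ(Z)]` a.s. -/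
def CondIndepC {Ω : Type*} [MeasurableSpace Ω] (μ : Measure Ω)
    {α β γ : Type*} [MeasurableSpace α] [MeasurableSpace β] [MeasurableSpace γ]
    (A : Ω → α) (B : Ω → β) (Z : Ω → γ) : Prop :=
  ∀ (f : α → ℝ) (g : β → ℝ), Measurable f → Measurable g →
    (∃ C, ∀ x, |f x| ≤ C) → (∃ C, ∀ x, |g x| ≤ C) →
    μ[(fun ω => f (A ω) * g (B ω)) | MeasurableSpace.comap Z inferInstance] =ᵐ[μ]
      (fun ω =>
        (μ[(fun ω' => f (A ω')) | MeasurableSpace.comap Z inferInstance]) ω *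
        (μ[(fun ω' => g (B ω')) | MeasurableSpace.comap Z inferInstance]) ω)

/-- A pointwise bounded a.e.-strongly measurable function is integrable w.r.t. a
finite measure. -/
lemma int_bdd {Ω : Type*} {mΩ : MeasurableSpace Ω} {μ : Measure Ω} [IsFiniteMeasure μ]
    {h : Ω → ℝ} (hm : AEStronglyMeasurable h μ) {C : ℝ} (hC : ∀ ω, |h ω| ≤ C) :
    Integrable h μ :=
  (integrable_const C).mono' hm
    (Filter.Eventually.of_forall fun ω => by simpa [Real.norm_eq_abs] using hC ω)

lemma stmt0_aux {Ω : Type*} {mΩ : MeasurableSpace Ω} (μ : Measure Ω) [IsProbabilityMeasure μ]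
    {d T : ℕ} (X : Ω → (Fin d → ℝ)) (W : Ω → Fin T)
    (hX : Measurable[mΩ] X) (hW : Measurable[mΩ] W) (w : Fin T)
    (D : Ω → ℝ) (hD : D = fun ω => if W ω = w then (1 : ℝ) else 0)
    (p : Ω → ℝ) (hp : p = μ[D | MeasurableSpace.comap X inferInstance]) :
    CondIndepC μ D X p ∧
      μ[D | MeasurableSpace.comap X inferInstance]
        =ᵐ[μ] μ[D | MeasurableSpace.comap p inferInstance] := by
  set m := MeasurableSpace.comap X inferInstance with hm_def
  set n := MeasurableSpace.comap p inferInstance with hn_def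
  have hm_le : m ≤ mΩ := hX.comap_le
  have hpm : Measurable[m] p := by
    rw [hp]; exact stronglyMeasurable_condExp.measurable
  have hn_le_m : n ≤ m := hpm.comap_le
  have hn_le : n ≤ mΩ := hn_le_m.trans hm_le
  have hpn : Measurable[n] p := Measurable.of_comap_le le_rfl
  have hXm : Measurable[m] X := Measurable.of_comap_le le_rfl
  have hpint : Integrable p μ := hp ▸ integrable_condExp
  have hDmeas : Measurable[mΩ] D := by
    rw [hD]
    exact Measurable.ite (hW (measurableSet_singleton w)) measurable_const measurable_const
  have hD1 : ∀ ω, |D ω| ≤ 1 := by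
    intro ω; simp only [hD]; split <;> norm_num
  have hDint : Integrable D μ := int_bdd hDmeas.aestronglyMeasurable hD1
  -- Part 2
  have hppn : μ[p|n] = p :=
    condExp_of_stronglyMeasurable hn_le hpn.stronglyMeasurable hpint
  have h2 : μ[D|m] =ᵐ[μ] μ[D|n] := by
    calc μ[D|m] = p := hp.symm
      _ = μ[p|n] := hppn.symm
      _ = μ[μ[D|m]|n] := by rw [hp]
      _ =ᵐ[μ] μ[D|n] := condExp_condExp_of_le hn_le_m hm_le
  refine ⟨?_, h2⟩
  -- Part 1
  intro f g hf hg hfb hgb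
  obtain ⟨Cg, hCg⟩ := hgb
  set gX : Ω → ℝ := fun ω => g (X ω) with hgX_def
  have hgXm : Measurable[mΩ] gX := hg.comp hX
  have hgXbdd : ∃ C, ∀ x, ‖gX x‖ ≤ C :=
    ⟨Cg, fun x => by simpa [Real.norm_eq_abs] using hCg (X x)⟩
  have hgXint : Integrable gX μ := int_bdd hgXm.aestronglyMeasurable fun ω => hCg (X ω)
  have hgXDint : Integrable (gX * D) μ := hDint.bdd_mul hgXm.aestronglyMeasurable (Filter.Eventually.of_forall hgXbdd.choose_spec)
  have hpgXint : Integrable (p * gX) μ := by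
    have := hpint.bdd_mul hgXm.aestronglyMeasurable (Filter.Eventually.of_forall hgXbdd.choose_spec)
    exact this.congr (Filter.Eventually.of_forall fun ω => mul_comm _ _)
  -- inner pull-out at level m
  have hinner : μ[gX * D|m] =ᵐ[μ] p * gX := by
    have := condExp_mul_of_stronglyMeasurable_left (μ := μ)
      ((hg.comp hXm).stronglyMeasurable) hgXDint hDint
    refine this.trans ?_
    rw [← hp]
    exact Filter.Eventually.of_forall fun ω => mul_comm _ _
  -- outer pull-out at level n
  have hpull : μ[p * gX|n] =ᵐ[μ] p * μ[gX|n] :=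
    condExp_mul_of_stronglyMeasurable_left hpn.stronglyMeasurable hpgXint hgXint
  have hkey : μ[gX * D|n] =ᵐ[μ] p * μ[gX|n] := by
    calc μ[gX * D|n] =ᵐ[μ] μ[μ[gX * D|m]|n] := (condExp_condExp_of_le hn_le_m hm_le).symm
      _ =ᵐ[μ] μ[p * gX|n] := condExp_congr_ae hinner
      _ =ᵐ[μ] p * μ[gX|n] := hpull
  -- decomposition of f ∘ D
  have hfD : (fun ω => f (D ω)) = fun ω => f 0 + (f 1 - f 0) * D ω := by
    funext ω
    by_cases h : W ω = w <;> simp [hD, h] <;> ring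
  have hDn : μ[D|n] =ᵐ[μ] p := (h2.symm.trans (by rw [← hp]))
  -- conditional expectation of f ∘ D given n
  have hEfD : μ[(fun ω => f (D ω))|n] =ᵐ[μ] fun ω => f 0 + (f 1 - f 0) * p ω := by
    rw [hfD]
    have hadd : μ[(fun ω => f 0 + (f 1 - f 0) * D ω)|n]
        =ᵐ[μ] μ[(fun _ => f 0)|n] + μ[(fun ω => (f 1 - f 0) * D ω)|n] :=
      condExp_add (integrable_const _) (hDint.const_mul _) _
    have hc : μ[(fun _ : Ω => f 0)|n] = fun _ => f 0 := condExp_const hn_le _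
    have hsmul : μ[(fun ω => (f 1 - f 0) * D ω)|n] =ᵐ[μ] fun ω => (f 1 - f 0) * (μ[D|n]) ω := by
      have := condExp_smul (μ := μ) (m := n) (f 1 - f 0) D
      exact this
    filter_upwards [hadd, hsmul, hDn] with ω h1 h2' h3
    simp only [Pi.add_apply] at h1
    rw [h1, hc, h2', h3]
  -- conditional expectation of the product given n
  have hprod : (fun ω => f (D ω) * g (X ω))
      = fun ω => f 0 * gX ω + (f 1 - f 0) * (gX ω * D ω) := by
    funext ω
    by_cases h : W ω = w <;> simp [hD, h, hgX_def] <;> ring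
  have hEprod : μ[(fun ω => f (D ω) * g (X ω))|n]
      =ᵐ[μ] fun ω => f 0 * (μ[gX|n]) ω + (f 1 - f 0) * (p ω * (μ[gX|n]) ω) := by
    rw [hprod]
    have hadd : μ[(fun ω => f 0 * gX ω + (f 1 - f 0) * (gX ω * D ω))|n]
        =ᵐ[μ] μ[(fun ω => f 0 * gX ω)|n] + μ[(fun ω => (f 1 - f 0) * (gX ω * D ω))|n] :=
      condExp_add (hgXint.const_mul _) (hgXDint.const_mul _) _
    have h1 : μ[(fun ω => f 0 * gX ω)|n] =ᵐ[μ] fun ω => f 0 * (μ[gX|n]) ω := by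
      have := condExp_smul (μ := μ) (m := n) (f 0) gX
      exact this
    have h2' : μ[(fun ω => (f 1 - f 0) * (gX ω * D ω))|n]
        =ᵐ[μ] fun ω => (f 1 - f 0) * (μ[gX * D|n]) ω := by
      have := condExp_smul (μ := μ) (m := n) (f 1 - f 0) (gX * D)
      exact this
    filter_upwards [hadd, h1, h2', hkey] with ω ha hb hc' hk
    simp only [Pi.add_apply] at ha
    rw [ha, hb, hc', hk]
    rfl
  -- conclude
  filter_upwards [hEprod, hEfD] with ω h1 h2'
  rw [show (μ[(fun ω' => f (D ω'))|n]) ω = f 0 + (f 1 - f 0) * p ω from h2', h1]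
  ring

/-- the treatment indicator `D(w)` is conditionally independent of the
covariates `X` given the generalized propensity score `p(w|X) = E[D(w)|σ(X)]`;
equivalently `E[D(w)|σ(X)] = E[D(w)|σ(p(w|X))]` a.s. -/
theorem stmt0 {Ω : Type*} [MeasurableSpace Ω] (μ : Measure Ω) [IsProbabilityMeasure μ]
    {d T : ℕ} (X : Ω → (Fin d → ℝ)) (W : Ω → Fin T)
    (hX : Measurable X) (hW : Measurable W) (w : Fin T)
    (D : Ω → ℝ) (hD : D = fun ω => if W ω = w then (1 : ℝ) else 0)
    (p : Ω → ℝ) (hp : p = μ[D | MeasurableSpace.comap X inferInstance]) :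
    CondIndepC μ D X p ∧
      μ[D | MeasurableSpace.comap X inferInstance]
        =ᵐ[μ] μ[D | MeasurableSpace.comap p inferInstance] :=
  stmt0_aux μ X W hX hW w D hD p hp
end

section
/- Under weak unconfoundedness (D(w) ⫫ Y(w) | X for all w), the treatment indicator D(w) is conditionally independent of the potential outcome Y(w) given the scalar generalized propensity score p(w|X): D(w) ⫫ Y(w) | p(w|X). -/
open MeasureTheory ProbabilityTheory

lemma stmt1_aux {Ω : Type*} [m0 : MeasurableSpace Ω] (μ : Measure Ω) [IsProbabilityMeasure μ]
    {mX mP : MeasurableSpace Ω} (hmP_mX : mP ≤ mX) (hmX : mX ≤ m0)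
    {Dw Yw pw : Ω → ℝ} (hDw : Measurable[m0] Dw) (hYw : Measurable[m0] Yw)
    (hDval : ∀ ω, Dw ω = 0 ∨ Dw ω = 1)
    (hpw : pw = μ[Dw | mX]) (hpwP : Measurable[mP] pw)
    (f g : ℝ → ℝ) (hf : Measurable f) (hg : Measurable g)
    {Cf Cg : ℝ} (hCf : ∀ x, |f x| ≤ Cf) (hCg : ∀ x, |g x| ≤ Cg)
    (unconf : μ[(fun ω => f (Dw ω) * g (Yw ω)) | mX] =ᵐ[μ]
      (fun ω => (μ[(fun ω' => f (Dw ω')) | mX]) ω * (μ[(fun ω' => g (Yw ω')) | mX]) ω)) :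
    μ[(fun ω => f (Dw ω) * g (Yw ω)) | mP] =ᵐ[μ]
      (fun ω => (μ[(fun ω' => f (Dw ω')) | mP]) ω * (μ[(fun ω' => g (Yw ω')) | mP]) ω) := by
  have hm : mP ≤ m0 := hmP_mX.trans hmX
  -- integrability from boundedness
  have int_of_bdd : ∀ (h : Ω → ℝ) (C : ℝ), Measurable[m0] h → (∀ x, |h x| ≤ C) →
      Integrable h μ := fun h C hmh hb =>
    (integrable_const C).mono' (hmh.aestronglyMeasurable (μ := μ))
      (Filter.Eventually.of_forall fun x => by simpa [Real.norm_eq_abs] using hb x)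
  have hCf0 : (0:ℝ) ≤ Cf := le_trans (abs_nonneg _) (hCf 0)
  have hCg0 : (0:ℝ) ≤ Cg := le_trans (abs_nonneg _) (hCg 0)
  have int_gY : Integrable (fun ω => g (Yw ω)) μ :=
    int_of_bdd _ Cg (hg.comp hYw) (fun ω => hCg _)
  have int_Dw : Integrable Dw μ := int_of_bdd _ 1 hDw (fun ω => by
    rcases hDval ω with h | h <;> simp [h])
  -- the key linear identity: f ∘ Dw = f 0 + (f 1 - f 0) • Dw
  have hfD_eq : (fun ω => f (Dw ω)) = (fun _ => f 0) + (f 1 - f 0) • Dw := by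
    funext ω
    simp only [Pi.add_apply, Pi.smul_apply, smul_eq_mul]
    rcases hDval ω with h | h <;> rw [h] <;> ring_nf <;> simp
  -- E[f ∘ Dw | mX] = f 0 + (f 1 - f 0) * pw
  have hC : μ[(fun ω => f (Dw ω))|mX] =ᵐ[μ] fun ω => f 0 + (f 1 - f 0) * pw ω := by
    rw [hfD_eq]
    have h2 := condExp_add (μ := μ) (m := mX) (integrable_const (f 0))
      (int_Dw.smul (f 1 - f 0))
    have h3 := condExp_smul (μ := μ) (m := mX) (f 1 - f 0) Dw
    filter_upwards [h2, h3] with ω h2ω h3ω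
    rw [h2ω]
    simp only [Pi.add_apply, Pi.smul_apply, smul_eq_mul, condExp_const hmX, h3ω, hpw]
  set h : Ω → ℝ := fun ω => f 0 + (f 1 - f 0) * pw ω with hhdef
  have hh_sm : StronglyMeasurable[mP] h :=
    (measurable_const.add (measurable_const.mul hpwP)).stronglyMeasurable
  have int_pw : Integrable pw μ := by rw [hpw]; exact integrable_condExp
  have hh_int : Integrable h μ := (integrable_const (f 0)).add (int_pw.const_mul _)
  -- G := E[g ∘ Yw | mX] is a.e. bounded by Cg
  set G : Ω → ℝ := μ[(fun ω => g (Yw ω))|mX] with hGdef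
  have hG_bdd : ∀ᵐ ω ∂μ, |G ω| ≤ ((⟨Cg, hCg0⟩ : NNReal) : ℝ) :=
    ae_bdd_condExp_of_ae_bdd (Filter.Eventually.of_forall fun ω => hCg _)
  have hG_int : Integrable G μ := integrable_condExp
  have int_hG : Integrable (h * G) μ := by
    refine Integrable.mono' (g := fun ω => |f 0| * Cg + |f 1 - f 0| * Cg * |pw ω|)
      ((integrable_const _).add (int_pw.abs.const_mul _))
      ((hh_sm.mono hm).aestronglyMeasurable.mul hG_int.aestronglyMeasurable) ?_
    filter_upwards [hG_bdd] with ω hG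
    simp only [Pi.mul_apply, Real.norm_eq_abs, abs_mul]
    have h1 : |h ω| ≤ |f 0| + |f 1 - f 0| * |pw ω| :=
      (abs_add_le _ _).trans (by rw [abs_mul])
    calc |h ω| * |G ω| ≤ (|f 0| + |f 1 - f 0| * |pw ω|) * Cg :=
          mul_le_mul h1 hG (abs_nonneg _) (by positivity)
      _ = |f 0| * Cg + |f 1 - f 0| * Cg * |pw ω| := by ring
  -- tower + unconfoundedness
  have tower_FG : μ[(fun ω => f (Dw ω) * g (Yw ω))|mP]
      =ᵐ[μ] μ[μ[(fun ω => f (Dw ω) * g (Yw ω))|mX]|mP] :=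
    (condExp_condExp_of_le hmP_mX hmX).symm
  have step1 : μ[μ[(fun ω => f (Dw ω) * g (Yw ω))|mX]|mP] =ᵐ[μ] μ[h * G|mP] := by
    refine condExp_congr_ae ?_
    filter_upwards [unconf, hC] with ω h1 h2
    simp only [Pi.mul_apply]
    rw [h1, h2]
  have step2 : μ[h * G|mP] =ᵐ[μ] h * μ[G|mP] :=
    condExp_mul_of_stronglyMeasurable_left hh_sm int_hG hG_int
  have tower_G : μ[G|mP] =ᵐ[μ] μ[(fun ω => g (Yw ω))|mP] :=
    condExp_condExp_of_le hmP_mX hmX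
  -- E[f ∘ Dw | mP] = h a.e.
  have hfDm : μ[(fun ω => f (Dw ω))|mP] =ᵐ[μ] h := by
    have t1 : μ[(fun ω => f (Dw ω))|mP] =ᵐ[μ] μ[μ[(fun ω => f (Dw ω))|mX]|mP] :=
      (condExp_condExp_of_le hmP_mX hmX).symm
    have t2 : μ[μ[(fun ω => f (Dw ω))|mX]|mP] =ᵐ[μ] μ[h|mP] := condExp_congr_ae hC
    have t3 : μ[h|mP] = h := condExp_of_stronglyMeasurable hm hh_sm hh_int
    exact t1.trans (t2.trans (by rw [t3]))
  calc μ[(fun ω => f (Dw ω) * g (Yw ω))|mP]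
      =ᵐ[μ] μ[μ[(fun ω => f (Dw ω) * g (Yw ω))|mX]|mP] := tower_FG
    _ =ᵐ[μ] μ[h * G|mP] := step1
    _ =ᵐ[μ] h * μ[G|mP] := step2
    _ =ᵐ[μ] fun ω => (μ[(fun ω' => f (Dw ω'))|mP]) ω * (μ[(fun ω' => g (Yw ω'))|mP]) ω := by
        filter_upwards [tower_G, hfDm] with ω h1 h2
        simp only [Pi.mul_apply]
        rw [h1, h2]

/-- under weak unconfoundedness (`D(w) ⫫ Y(w) | X` for all `w`),
`D(w)` is conditionally independent of `Y(w)` given the scalar GPS `p(w|X)`. -/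
theorem stmt1 {Ω : Type*} [MeasurableSpace Ω] (μ : Measure Ω) [IsProbabilityMeasure μ]
    {d T : ℕ} (X : Ω → (Fin d → ℝ)) (W : Ω → Fin T) (Y : Fin T → Ω → ℝ)
    (hX : Measurable X) (hW : Measurable W) (hY : ∀ w, Measurable (Y w))
    (D : Fin T → Ω → ℝ) (hD : ∀ w, D w = fun ω => if W ω = w then (1 : ℝ) else 0)
    (p : Fin T → Ω → ℝ)
    (hp : ∀ w, p w = μ[D w | MeasurableSpace.comap X inferInstance])
    (unconf : ∀ w, CondIndepC μ (D w) (Y w) X) :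
    ∀ w, CondIndepC μ (D w) (Y w) (p w) := by
  intro w f g hf hg hfb hgb
  obtain ⟨Cf, hCf⟩ := hfb
  obtain ⟨Cg, hCg⟩ := hgb
  have hmX : MeasurableSpace.comap X inferInstance ≤ ‹MeasurableSpace Ω› := hX.comap_le
  have hpw_mX : Measurable[MeasurableSpace.comap X inferInstance] (p w) := by
    rw [hp w]; exact stronglyMeasurable_condExp.measurable
  have hmP_mX : MeasurableSpace.comap (p w) inferInstance ≤
      MeasurableSpace.comap X inferInstance := hpw_mX.comap_le
  have hDw : Measurable (D w) := by
    rw [hD w]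
    exact Measurable.ite (hW (measurableSet_singleton w)) measurable_const measurable_const
  have hDval : ∀ ω, D w ω = 0 ∨ D w ω = 1 := fun ω => by
    rw [hD w]; by_cases hω : W ω = w <;> simp [hω]
  have hpwP : Measurable[MeasurableSpace.comap (p w) inferInstance] (p w) :=
    Measurable.of_comap_le le_rfl
  exact stmt1_aux (m0 := ‹MeasurableSpace Ω›) μ hmP_mX hmX hDw (hY w) hDval (hp w) hpwP f g hf hg hCf hCg
    (unconf w f g hf hg ⟨Cf, hCf⟩ ⟨Cg, hCg⟩)
end

section
/- Suppose D(w) ⫫ Y(w) | p(w|X), P(W=w|X) > 0 a.s., Y(w) is integrable, and the observed outcome satisfies Y = Y(W) (consistency). Then the mean potential outcome is identified: E[Y(w)] = E[ E[Y | W = w, p(w|X)] ], where the inner conditional expectation is over the distribution of p(w|X). -/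
open MeasureTheory ProbabilityTheory

/-- identification of the mean potential outcome:
`E[Y(w)] = E[ E[Y | W = w, p(w|X)] ]`, where `E[Y | W = w, Z] = E[D(w)Y|σ(Z)]/E[D(w)|σ(Z)]`. -/
theorem stmt2 {Ω : Type*} [MeasurableSpace Ω] (μ : Measure Ω) [IsProbabilityMeasure μ]
    {d T : ℕ} (X : Ω → (Fin d → ℝ)) (W : Ω → Fin T) (Y : Fin T → Ω → ℝ)
    (hX : Measurable X) (hW : Measurable W) (hYm : ∀ w, Measurable (Y w))
    (hYint : ∀ w, Integrable (Y w) μ)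
    (Yobs : Ω → ℝ) (hYobs : Yobs = fun ω => Y (W ω) ω)
    (w : Fin T)
    (D : Ω → ℝ) (hD : D = fun ω => if W ω = w then (1 : ℝ) else 0)
    (p : Ω → ℝ) (hp : p = μ[D | MeasurableSpace.comap X inferInstance])
    (overlap : ∀ᵐ ω ∂μ, 0 < p ω)
    (unconf : CondIndepC μ D (Y w) p) :
    ∫ ω, Y w ω ∂μ =
      ∫ ω, (μ[(fun ω' => D ω' * Yobs ω') | MeasurableSpace.comap p inferInstance]) ω /
           (μ[D | MeasurableSpace.comap p inferInstance]) ω ∂μ := by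
  classical
  rename_i mOmega hPr
  -- basic measurability
  have hDmeas : Measurable D := by
    rw [hD]
    exact Measurable.ite (hW (measurableSet_singleton w)) measurable_const measurable_const
  have hD01 : ∀ ω, D ω = 0 ∨ D ω = 1 := by
    intro ω; rw [hD]; by_cases h : W ω = w <;> simp [h]
  have hDabs : ∀ ω, |D ω| ≤ 1 := by
    intro ω; rcases hD01 ω with h | h <;> rw [h] <;> norm_num
  have hDint : Integrable D μ :=
    Integrable.mono' (integrable_const (1 : ℝ)) hDmeas.aestronglyMeasurable
      (Filter.Eventually.of_forall fun ω => by simpa using hDabs ω)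
  have hpm0 : Measurable p := by
    rw [hp]; exact stronglyMeasurable_condExp.measurable.mono hX.comap_le le_rfl
  have hm : MeasurableSpace.comap p (inferInstance : MeasurableSpace ℝ) ≤ ‹MeasurableSpace Ω› :=
    hpm0.comap_le
  set m := MeasurableSpace.comap p (inferInstance : MeasurableSpace ℝ) with hmdef
  letI : MeasurableSpace Ω := mOmega
  haveI hsf : SigmaFinite (μ.trim hm) := by infer_instance
  have hmX : m ≤ MeasurableSpace.comap X inferInstance := by
    rw [hmdef, hp]
    exact measurable_iff_comap_le.1 stronglyMeasurable_condExp.measurable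
  have hpmm : Measurable[m] p := measurable_iff_comap_le.2 le_rfl
  -- E[D|m] = p a.e.
  have hDmp : μ[D|m] =ᵐ[μ] p := by
    have h1 : μ[μ[D|MeasurableSpace.comap X inferInstance]|m] =ᵐ[μ] μ[D|m] :=
      condExp_condExp_of_le hmX hX.comap_le
    have h2 : μ[p|m] = p :=
      condExp_of_stronglyMeasurable hm hpmm.stronglyMeasurable (by rw [hp]; exact integrable_condExp)
    calc μ[D|m] =ᵐ[μ] μ[p|m] := by rw [hp]; exact h1.symm
      _ = p := h2
  have hDmbd : ∀ᵐ ω ∂μ, |(μ[D|m]) ω| ≤ 1 := by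
    have h0 : 0 ≤ᵐ[μ] μ[D|m] :=
      condExp_nonneg (Filter.Eventually.of_forall fun ω => by
        rcases hD01 ω with h | h <;> rw [h] <;> norm_num)
    have h1 : μ[D|m] ≤ᵐ[μ] μ[(fun _ => (1:ℝ))|m] :=
      condExp_mono hDint (integrable_const 1)
        (Filter.Eventually.of_forall fun ω => by
          rcases hD01 ω with h | h <;> rw [h] <;> norm_num)
    rw [condExp_const hm] at h1
    filter_upwards [h0, h1] with ω h0 h1
    simp only [Pi.zero_apply] at h0
    rw [abs_le]; exact ⟨by linarith, h1⟩
  -- D * Yobs = D * Y w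
  have hDY : (fun ω' => D ω' * Yobs ω') = fun ω => D ω * Y w ω := by
    funext ω; rw [hD, hYobs]
    by_cases h : W ω = w <;> simp [h]
  have hDYint : Integrable (fun ω => D ω * Y w ω) μ :=
    Integrable.mono' (hYint w).norm (hDmeas.mul (hYm w)).aestronglyMeasurable
      (Filter.Eventually.of_forall fun ω => by
        have := hDabs ω
        calc ‖D ω * Y w ω‖ = |D ω| * |Y w ω| := abs_mul _ _
          _ ≤ 1 * |Y w ω| := by
            apply mul_le_mul_of_nonneg_right this (abs_nonneg _)
          _ = ‖Y w ω‖ := by rw [one_mul, Real.norm_eq_abs])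
  -- truncation
  set gtr : ℕ → ℝ → ℝ := fun n x => max (-(n:ℝ)) (min x n) with hgtr
  have hgtr_meas : ∀ n, Measurable (gtr n) := fun n =>
    measurable_const.max (measurable_id.min measurable_const)
  have hgtr_bdd : ∀ n x, |gtr n x| ≤ (n : ℝ) := by
    intro n x
    rw [abs_le]
    constructor
    · exact le_max_left _ _
    · exact max_le (le_trans (neg_nonpos.2 (Nat.cast_nonneg n)) (Nat.cast_nonneg n))
        (min_le_right _ _)
  have hgtr_le : ∀ n x, |gtr n x| ≤ |x| := by
    intro n x
    rw [abs_le]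
    constructor
    · refine le_trans ?_ (le_max_right _ _)
      rcases le_total x (n : ℝ) with h | h
      · rw [min_eq_left h]; exact neg_abs_le x
      · rw [min_eq_right h]
        exact le_trans (neg_nonpos.2 (abs_nonneg x)) (Nat.cast_nonneg n)
    · refine max_le (le_trans (neg_nonpos.2 (Nat.cast_nonneg n)) (abs_nonneg x)) ?_
      exact le_trans (min_le_left _ _) (le_abs_self x)
  have hgtr_tend : ∀ x : ℝ, Filter.Tendsto (fun n => gtr n x) Filter.atTop (nhds x) := by
    intro x
    apply tendsto_atTop_of_eventually_const (i₀ := ⌈|x|⌉₊)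
    intro n hn
    have hxn : |x| ≤ (n : ℝ) := le_trans (Nat.le_ceil _) (by exact_mod_cast hn)
    rw [hgtr]
    simp only
    rw [min_eq_left (le_trans (le_abs_self x) hxn),
      max_eq_right (le_trans (neg_le_neg hxn) (neg_abs_le x))]
  -- the bounded function reproducing D
  set fD : ℝ → ℝ := fun x => min (max x 0) 1 with hfD
  have hfD_meas : Measurable fD := (measurable_id.max measurable_const).min measurable_const
  have hfD_bdd : ∀ x, |fD x| ≤ 1 := by
    intro x
    rw [abs_le]
    constructor
    · exact le_trans (by norm_num) (le_min (le_max_right _ _) zero_le_one)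
    · exact min_le_right _ _
  have hfD_D : ∀ ω, fD (D ω) = D ω := by
    intro ω; rcases hD01 ω with h | h <;> rw [h, hfD] <;> norm_num
  -- conditional independence applied to truncations
  have keyn : ∀ n : ℕ,
      μ[(fun ω => D ω * gtr n (Y w ω))|m] =ᵐ[μ]
        fun ω => (μ[D|m]) ω * (μ[(fun ω' => gtr n (Y w ω'))|m]) ω := by
    intro n
    have := unconf fD (gtr n) hfD_meas (hgtr_meas n) ⟨1, hfD_bdd⟩ ⟨n, hgtr_bdd n⟩
    simp only [hfD_D] at this
    exact this
  -- main identity: E[D Y(w) | m] = E[D|m] * E[Y(w)|m] a.e.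
  have key : (fun ω => (μ[D|m]) ω * (μ[Y w|m]) ω) =ᵐ[μ] μ[(fun ω => D ω * Y w ω)|m] := by
    apply ae_eq_condExp_of_forall_setIntegral_eq hm hDYint
    · intro s _ _
      exact (Integrable.mono' integrable_condExp.norm
        (stronglyMeasurable_condExp.mono hm |>.mul
          (stronglyMeasurable_condExp.mono hm)).aestronglyMeasurable
        (by
          filter_upwards [hDmbd] with ω hb
          calc ‖(μ[D|m]) ω * (μ[Y w|m]) ω‖ = |(μ[D|m]) ω| * |(μ[Y w|m]) ω| := abs_mul _ _
            _ ≤ 1 * |(μ[Y w|m]) ω| := mul_le_mul_of_nonneg_right hb (abs_nonneg _)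
            _ = ‖(μ[Y w|m]) ω‖ := by simp)).integrableOn
    · intro s hs hμs
      -- limiting argument
      set En : ℕ → Ω → ℝ := fun n => μ[(fun ω' => gtr n (Y w ω'))|m] with hEn
      have hgtrYint : ∀ n, Integrable (fun ω => gtr n (Y w ω)) μ := fun n =>
        Integrable.mono' (hYint w).norm ((hgtr_meas n).comp (hYm w)).aestronglyMeasurable
          (Filter.Eventually.of_forall fun ω => by simpa using hgtr_le n (Y w ω))
      have hDgtrYint : ∀ n, Integrable (fun ω => D ω * gtr n (Y w ω)) μ := fun n =>
        Integrable.mono' (hYint w).norm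
          (hDmeas.mul ((hgtr_meas n).comp (hYm w))).aestronglyMeasurable
          (Filter.Eventually.of_forall fun ω => by
            calc ‖D ω * gtr n (Y w ω)‖ = |D ω| * |gtr n (Y w ω)| := abs_mul _ _
              _ ≤ 1 * |Y w ω| :=
                mul_le_mul (hDabs ω) (hgtr_le n _) (abs_nonneg _) zero_le_one
              _ = ‖Y w ω‖ := by rw [one_mul, Real.norm_eq_abs])
      -- A n : common value
      set A : ℕ → ℝ := fun n => ∫ ω in s, D ω * gtr n (Y w ω) ∂μ with hA
      have hA_eq : ∀ n, A n = ∫ ω in s, (μ[D|m]) ω * En n ω ∂μ := by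
        intro n
        rw [hA]
        simp only
        rw [← setIntegral_condExp hm (hDgtrYint n) hs]
        exact integral_congr_ae (ae_restrict_of_ae (keyn n))
      -- first limit
      have hT1 : Filter.Tendsto A Filter.atTop (nhds (∫ ω in s, D ω * Y w ω ∂μ)) := by
        apply tendsto_integral_of_dominated_convergence (fun ω => |Y w ω|)
        · intro n
          exact (hDmeas.mul ((hgtr_meas n).comp (hYm w))).aestronglyMeasurable.restrict
        · exact (hYint w).abs.restrict
        · intro n
          apply Filter.Eventually.of_forall
          intro ω
          calc ‖D ω * gtr n (Y w ω)‖ = |D ω| * |gtr n (Y w ω)| := abs_mul _ _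
            _ ≤ 1 * |Y w ω| :=
              mul_le_mul (hDabs ω) (hgtr_le n _) (abs_nonneg _) zero_le_one
            _ = |Y w ω| := one_mul _
        · apply Filter.Eventually.of_forall
          intro ω
          exact (hgtr_tend (Y w ω)).const_mul (D ω)
      -- second limit
      have hT2 : Filter.Tendsto A Filter.atTop (nhds (∫ ω in s, (μ[D|m]) ω * (μ[Y w|m]) ω ∂μ)) := by
        have hbn : Filter.Tendsto (fun n => ∫ ω, |gtr n (Y w ω) - Y w ω| ∂μ)
            Filter.atTop (nhds 0) := by
          have h0 : (0 : ℝ) = ∫ ω, |Y w ω - Y w ω| ∂μ := by simp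
          rw [h0]
          apply tendsto_integral_of_dominated_convergence (fun ω => 2 * |Y w ω|)
          · intro n
            exact ((((hgtr_meas n).comp (hYm w)).sub (hYm w)).abs).aestronglyMeasurable
          · exact (hYint w).abs.const_mul 2
          · intro n
            apply Filter.Eventually.of_forall
            intro ω
            have h1 := hgtr_le n (Y w ω)
            calc ‖|gtr n (Y w ω) - Y w ω|‖ = |gtr n (Y w ω) - Y w ω| := by
                  rw [Real.norm_eq_abs, abs_abs]
              _ ≤ |gtr n (Y w ω)| + |Y w ω| := abs_sub _ _
              _ ≤ 2 * |Y w ω| := by linarith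
          · apply Filter.Eventually.of_forall
            intro ω
            exact (((hgtr_tend (Y w ω)).sub tendsto_const_nhds).abs)
        have hdist : ∀ n, dist (A n) (∫ ω in s, (μ[D|m]) ω * (μ[Y w|m]) ω ∂μ) ≤
            ∫ ω, |gtr n (Y w ω) - Y w ω| ∂μ := by
          intro n
          have hEnint : Integrable (fun ω => (μ[D|m]) ω * En n ω) μ :=
            Integrable.mono' integrable_condExp.norm
              (stronglyMeasurable_condExp.mono hm |>.mul
                (stronglyMeasurable_condExp.mono hm)).aestronglyMeasurable
              (by
                filter_upwards [hDmbd] with ω hb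
                calc ‖(μ[D|m]) ω * En n ω‖ = |(μ[D|m]) ω| * |En n ω| := abs_mul _ _
                  _ ≤ 1 * |En n ω| := mul_le_mul_of_nonneg_right hb (abs_nonneg _)
                  _ = ‖En n ω‖ := by simp)
          have hEint : Integrable (fun ω => (μ[D|m]) ω * (μ[Y w|m]) ω) μ :=
            Integrable.mono' integrable_condExp.norm
              (stronglyMeasurable_condExp.mono hm |>.mul
                (stronglyMeasurable_condExp.mono hm)).aestronglyMeasurable
              (by
                filter_upwards [hDmbd] with ω hb
                calc ‖(μ[D|m]) ω * (μ[Y w|m]) ω‖ = |(μ[D|m]) ω| * |(μ[Y w|m]) ω| := abs_mul _ _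
                  _ ≤ 1 * |(μ[Y w|m]) ω| := mul_le_mul_of_nonneg_right hb (abs_nonneg _)
                  _ = ‖(μ[Y w|m]) ω‖ := by simp)
          rw [Real.dist_eq, hA_eq n,
            ← integral_sub hEnint.restrict hEint.restrict]
          have hcsub : En n - μ[Y w|m] =ᵐ[μ] μ[(fun ω => gtr n (Y w ω) - Y w ω)|m] :=
            (condExp_sub (hgtrYint n) (hYint w) m).symm
          calc |∫ ω in s, ((μ[D|m]) ω * En n ω - (μ[D|m]) ω * (μ[Y w|m]) ω) ∂μ|
              ≤ ∫ ω in s, ‖(μ[D|m]) ω * En n ω - (μ[D|m]) ω * (μ[Y w|m]) ω‖ ∂μ :=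
                by rw [← Real.norm_eq_abs]; exact norm_integral_le_integral_norm _
            _ ≤ ∫ ω in s, |En n ω - (μ[Y w|m]) ω| ∂μ := by
                apply integral_mono_ae
                  ((hEnint.restrict).sub (hEint.restrict)).norm
                  ((integrable_condExp.sub integrable_condExp).abs.restrict)
                apply ae_restrict_of_ae
                filter_upwards [hDmbd] with ω hb
                calc ‖(μ[D|m]) ω * En n ω - (μ[D|m]) ω * (μ[Y w|m]) ω‖
                    = |(μ[D|m]) ω| * |En n ω - (μ[Y w|m]) ω| := by
                      rw [← mul_sub, Real.norm_eq_abs, abs_mul]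
                  _ ≤ 1 * |En n ω - (μ[Y w|m]) ω| :=
                      mul_le_mul_of_nonneg_right hb (abs_nonneg _)
                  _ = |En n ω - (μ[Y w|m]) ω| := one_mul _
            _ ≤ ∫ ω, |En n ω - (μ[Y w|m]) ω| ∂μ :=
                setIntegral_le_integral ((integrable_condExp.sub integrable_condExp).abs)
                  (Filter.Eventually.of_forall fun ω => abs_nonneg _)
            _ = ∫ ω, |(μ[(fun ω => gtr n (Y w ω) - Y w ω)|m]) ω| ∂μ := by
                apply integral_congr_ae
                filter_upwards [hcsub] with ω h
                simp only [Pi.sub_apply] at h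
                rw [h]
            _ ≤ ∫ ω, |gtr n (Y w ω) - Y w ω| ∂μ := integral_abs_condExp_le _
        rw [tendsto_iff_dist_tendsto_zero]
        exact squeeze_zero (fun n => dist_nonneg) hdist hbn
      exact (tendsto_nhds_unique hT2 hT1)
    · exact (stronglyMeasurable_condExp.mul stronglyMeasurable_condExp).aestronglyMeasurable
  -- conclusion
  rw [hDY]
  have hfinal : (fun ω => (μ[(fun ω => D ω * Y w ω)|m]) ω / (μ[D|m]) ω) =ᵐ[μ]
      μ[Y w|m] := by
    filter_upwards [key, hDmp, overlap] with ω hk hq ho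
    rw [← hk, hq, mul_comm, mul_div_assoc, div_self (ne_of_gt (hq ▸ ho)), mul_one]
  rw [integral_congr_ae hfinal, integral_condExp hm]
end

section
/- If X is any measurable function of the covariate vector (in particular any single coordinate of any subset of the baseline covariates), then D(w) ⫫ X | p(w|X_full), where p(w|X_full) = P(W = w | X_full) is the generalized propensity score computed from the full covariate vector X_full whenever X is σ(X_full)-measurable. -/
open MeasureTheory ProbabilityTheory

/-- A bounded a.e.-strongly measurable function is integrable w.r.t. a finite measure. -/
lemma integrable_of_abs_bound {Ω : Type*} [MeasurableSpace Ω] {μ : Measure Ω}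
    [IsFiniteMeasure μ] {h : Ω → ℝ} (hm : AEStronglyMeasurable h μ) {C : ℝ}
    (hb : ∀ ω, |h ω| ≤ C) : Integrable h μ :=
  (integrable_const C).mono' hm
    (Filter.Eventually.of_forall fun ω => by simpa [Real.norm_eq_abs] using hb ω)

/-- Abstract core of the propensity-score lemma: if `E[fD | m2]` is an affine function
of `p`, `G` is `m2`-measurable and `p` is `m1`-measurable, with `m1 ≤ m2 ≤ m0`, then
`fD` and `G` are conditionally independent given `m1` (product form). -/
lemma condexp_mul_aux {Ω : Type*} {m1 m2 m0 : MeasurableSpace Ω} {μ : Measure Ω}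
    [IsFiniteMeasure μ]
    (hm1 : m1 ≤ m2) (hm2 : m2 ≤ m0)
    (fD G p : Ω → ℝ) (a c : ℝ)
    (h1 : μ[fD | m2] =ᵐ[μ] fun ω => a + c * p ω)
    (hintfD : Integrable fD μ) (hintG : Integrable G μ) (hintp : Integrable p μ)
    (hintGfD : Integrable (G * fD) μ) (hintpG : Integrable (p * G) μ)
    (hGSM2 : StronglyMeasurable[m2] G) (hpSM1 : StronglyMeasurable[m1] p) :
    μ[(fun ω => fD ω * G ω) | m1] =ᵐ[μ]
      fun ω => (μ[fD | m1]) ω * (μ[G | m1]) ω := by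
  have hm1' : m1 ≤ m0 := hm1.trans hm2
  -- pull-out on m2
  have h3 : μ[G * fD | m2] =ᵐ[μ] G * μ[fD | m2] :=
    condExp_mul_of_stronglyMeasurable_left hGSM2 hintGfD hintfD
  -- pull-out on m1 for p
  have h7 : μ[p * G | m1] =ᵐ[μ] p * μ[G | m1] :=
    condExp_mul_of_stronglyMeasurable_left hpSM1 hintpG hintG
  -- LHS computation
  have hLHS : μ[(fun ω => fD ω * G ω) | m1] =ᵐ[μ]
      fun ω => (a + c * p ω) * (μ[G | m1]) ω := by
    have htow : μ[μ[G * fD | m2] | m1] =ᵐ[μ] μ[G * fD | m1] :=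
      condExp_condExp_of_le hm1 hm2
    have e0 : μ[(fun ω => fD ω * G ω) | m1] = μ[G * fD | m1] := by
      have efun : (fun ω => fD ω * G ω) = G * fD := by
        funext ω; show fD ω * G ω = G ω * fD ω; exact mul_comm _ _
      rw [efun]
    rw [e0]
    refine (htow.symm.trans ?_)
    have e1 : μ[μ[G * fD | m2] | m1] =ᵐ[μ] μ[(fun ω => G ω * (a + c * p ω)) | m1] := by
      refine condExp_congr_ae ?_
      filter_upwards [h3, h1] with ω h3ω h1ω
      rw [h3ω]; simp only [Pi.mul_apply, h1ω]
    refine e1.trans ?_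
    have e2 : (fun ω => G ω * (a + c * p ω)) = (a • G) + c • (p * G) := by
      funext ω; simp [smul_eq_mul]; ring
    rw [e2]
    refine (condExp_add (hintG.smul a) (hintpG.smul c) _).trans ?_
    have e3 : μ[a • G | m1] =ᵐ[μ] a • μ[G | m1] := condExp_smul _ _ _
    have e4 : μ[c • (p * G) | m1] =ᵐ[μ] c • μ[p * G | m1] := condExp_smul _ _ _
    filter_upwards [e3, e4, h7] with ω e3ω e4ω h7ω
    simp only [Pi.add_apply, e3ω, e4ω, Pi.smul_apply, smul_eq_mul, h7ω, Pi.mul_apply]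
    ring
  -- RHS computation
  have hRHSf : μ[fD | m1] =ᵐ[μ] fun ω => a + c * p ω := by
    have htow : μ[μ[fD | m2] | m1] =ᵐ[μ] μ[fD | m1] := condExp_condExp_of_le hm1 hm2
    refine htow.symm.trans ?_
    refine (condExp_congr_ae h1).trans ?_
    have hsm : StronglyMeasurable[m1] (fun ω => a + c * p ω) :=
      stronglyMeasurable_const.add (stronglyMeasurable_const.mul hpSM1)
    have hint : Integrable (fun ω => a + c * p ω) μ :=
      (integrable_const a).add (hintp.smul c)
    rw [condExp_of_stronglyMeasurable hm1' hsm hint]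
  filter_upwards [hLHS, hRHSf] with ω hL hR
  rw [hL, hR]

/-- Lemma 1: if `X` is any `σ(X_full)`-measurable real random variable,
then `D(w) ⫫ X | p(w|X_full)`, where `p(w|X_full) = E[D(w)|σ(X_full)]`. -/
theorem stmt3 {Ω : Type*} [MeasurableSpace Ω] (μ : Measure Ω) [IsProbabilityMeasure μ]
    {d T : ℕ} (Xfull : Ω → (Fin d → ℝ)) (W : Ω → Fin T)
    (hXfull : Measurable Xfull) (hW : Measurable W) (w : Fin T)
    (X : Ω → ℝ)
    (hX : @Measurable Ω ℝ (MeasurableSpace.comap Xfull inferInstance) _ X)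
    (D : Ω → ℝ) (hD : D = fun ω => if W ω = w then (1 : ℝ) else 0)
    (p : Ω → ℝ) (hp : p = μ[D | MeasurableSpace.comap Xfull inferInstance]) :
    CondIndepC μ D X p := by
  intro f g hf hg hfb hgb
  obtain ⟨Cf, hCf⟩ := hfb
  obtain ⟨Cg, hCg⟩ := hgb
  have hm2 : MeasurableSpace.comap Xfull inferInstance ≤ ‹MeasurableSpace Ω› :=
    hXfull.comap_le
  have hpSM2 : StronglyMeasurable[MeasurableSpace.comap Xfull inferInstance] p :=
    hp ▸ stronglyMeasurable_condExp
  have hm1 : MeasurableSpace.comap p inferInstance ≤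
      MeasurableSpace.comap Xfull inferInstance :=
    hpSM2.measurable.comap_le
  have hpSM1 : StronglyMeasurable[MeasurableSpace.comap p inferInstance] p :=
    (Measurable.of_comap_le le_rfl).stronglyMeasurable
  have hDmeas : Measurable D := by
    rw [hD]
    exact Measurable.ite (hW (measurableSet_singleton w)) measurable_const measurable_const
  have hfDmeas : Measurable (fun ω => f (D ω)) := hf.comp hDmeas
  have hGSM2 : StronglyMeasurable[MeasurableSpace.comap Xfull inferInstance]
      (fun ω => g (X ω)) := (hg.comp hX).stronglyMeasurable
  have hGmeas : Measurable (fun ω => g (X ω)) := ((hg.comp hX).mono hm2 le_rfl)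
  have hintfD : Integrable (fun ω => f (D ω)) μ :=
    integrable_of_abs_bound hfDmeas.aestronglyMeasurable (fun ω => hCf _)
  have hintG : Integrable (fun ω => g (X ω)) μ :=
    integrable_of_abs_bound hGmeas.aestronglyMeasurable (fun ω => hCg _)
  have hintD : Integrable D μ := by
    refine integrable_of_abs_bound hDmeas.aestronglyMeasurable (C := 1) fun ω => ?_
    rw [hD]; dsimp only; split <;> simp
  have hintp : Integrable p μ := hp ▸ integrable_condExp
  have hintGfD : Integrable ((fun ω => g (X ω)) * (fun ω => f (D ω))) μ := by
    refine integrable_of_abs_bound (hGmeas.mul hfDmeas).aestronglyMeasurable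
      (C := |Cg| * |Cf|) fun ω => ?_
    calc |g (X ω) * f (D ω)| = |g (X ω)| * |f (D ω)| := abs_mul _ _
      _ ≤ |Cg| * |Cf| :=
        mul_le_mul ((hCg _).trans (le_abs_self _)) ((hCf _).trans (le_abs_self _))
          (abs_nonneg _) (abs_nonneg _)
  have hintpG : Integrable (p * (fun ω => g (X ω))) μ := by
    have h := hintp.bdd_mul (c := |Cg|) hGmeas.aestronglyMeasurable
      (Filter.Eventually.of_forall fun ω => by
        simpa [Real.norm_eq_abs] using (hCg (X ω)).trans (le_abs_self _))
    have : (p * fun ω => g (X ω)) = fun ω => g (X ω) * p ω := by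
      funext ω; exact mul_comm _ _
    rw [this]; exact h
  -- decomposition of f ∘ D and step 1
  have h1 : μ[(fun ω => f (D ω)) | MeasurableSpace.comap Xfull inferInstance] =ᵐ[μ]
      fun ω => f 0 + (f 1 - f 0) * p ω := by
    have hrw : (fun ω => f (D ω)) = (fun _ : Ω => f 0) + (f 1 - f 0) • D := by
      funext ω
      rw [hD]
      dsimp only [Pi.add_apply, Pi.smul_apply, smul_eq_mul]
      split <;> simp
    rw [hrw]
    refine (condExp_add (integrable_const _) (hintD.smul (f 1 - f 0)) _).trans ?_
    have h2 : μ[(fun _ : Ω => f 0) | MeasurableSpace.comap Xfull inferInstance] =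
        fun _ => f 0 := condExp_const hm2 _
    have h3 : μ[(f 1 - f 0) • D | MeasurableSpace.comap Xfull inferInstance] =ᵐ[μ]
        (f 1 - f 0) • μ[D | MeasurableSpace.comap Xfull inferInstance] := condExp_smul _ _ _
    filter_upwards [h3] with ω h3ω
    simp only [Pi.add_apply, h2, h3ω, Pi.smul_apply, smul_eq_mul, hp]
  exact condexp_mul_aux hm1 hm2 (fun ω => f (D ω)) (fun ω => g (X ω)) p
    (f 0) (f 1 - f 0) h1 hintfD hintG hintp hintGfD hintpG hGSM2 hpSM1
end

section
/- Let Z = p(w|X) be the generalized propensity score and X a real covariate with finite second moment satisfying D(w) ⫫ X | Z and Z > 0 a.s. Then the conditional mean of X among treated units equals the overall conditional mean: E[X | W = w, Z] = E[X | Z] almost surely, and consequently E[ D(w) X / Z ] = E[X]. -/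
open MeasureTheory ProbabilityTheory
open ENNReal

lemma key_lintegral {Ω : Type*} {m : MeasurableSpace Ω} [inst : MeasurableSpace Ω]
    (μ : Measure Ω) [IsProbabilityMeasure μ] (hm : m ≤ inst) {D : Ω → ℝ}
    (hDint : Integrable D μ) (hDnn : 0 ≤ᵐ[μ] D)
    {h : Ω → ℝ≥0∞} (hh : Measurable[m] h) :
    ∫⁻ ω, ‖D ω‖₊ * h ω ∂μ = ∫⁻ ω, ‖(μ[D|m]) ω‖₊ * h ω ∂μ := by
  have hZint : Integrable (μ[D|m]) μ := integrable_condExp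
  have hZnn : 0 ≤ᵐ[μ] μ[D|m] := condExp_nonneg hDnn
  have hDm : AEMeasurable (fun ω => (‖D ω‖₊ : ℝ≥0∞)) μ :=
    hDint.aestronglyMeasurable.aemeasurable.enorm
  have hZm : AEMeasurable (fun ω => (‖(μ[D|m]) ω‖₊ : ℝ≥0∞)) μ :=
    hZint.aestronglyMeasurable.aemeasurable.enorm
  have hhm : Measurable h := hh.mono hm le_rfl
  set ν₁ := μ.withDensity fun ω => (‖D ω‖₊ : ℝ≥0∞) with hν₁
  set ν₂ := μ.withDensity fun ω => (‖(μ[D|m]) ω‖₊ : ℝ≥0∞) with hν₂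
  have htrim : ν₁.trim hm = ν₂.trim hm := by
    refine @Measure.ext Ω m _ _ fun s hs => ?_
    rw [trim_measurableSet_eq hm hs, trim_measurableSet_eq hm hs, hν₁, hν₂,
      withDensity_apply _ (hm s hs), withDensity_apply _ (hm s hs)]
    have e1 : ∫⁻ ω in s, ‖D ω‖₊ ∂μ = ENNReal.ofReal (∫ ω in s, D ω ∂μ) := by
      rw [ofReal_integral_eq_lintegral_ofReal hDint.restrict (ae_restrict_of_ae hDnn)]
      exact lintegral_congr_ae (ae_restrict_of_ae
        (hDnn.mono fun ω hω => Real.enorm_eq_ofReal hω))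
    have e2 : ∫⁻ ω in s, ‖(μ[D|m]) ω‖₊ ∂μ = ENNReal.ofReal (∫ ω in s, (μ[D|m]) ω ∂μ) := by
      rw [ofReal_integral_eq_lintegral_ofReal hZint.restrict (ae_restrict_of_ae hZnn)]
      exact lintegral_congr_ae (ae_restrict_of_ae
        (hZnn.mono fun ω hω => Real.enorm_eq_ofReal hω))
    rw [e1, e2, setIntegral_condExp hm hDint hs]
  calc ∫⁻ ω, ‖D ω‖₊ * h ω ∂μ = ∫⁻ ω, h ω ∂ν₁ := by
        rw [hν₁, lintegral_withDensity_eq_lintegral_mul₀ hDm hhm.aemeasurable]; rfl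
    _ = ∫⁻ ω, h ω ∂(ν₁.trim hm) := (lintegral_trim hm hh).symm
    _ = ∫⁻ ω, h ω ∂(ν₂.trim hm) := by rw [htrim]
    _ = ∫⁻ ω, h ω ∂ν₂ := lintegral_trim hm hh
    _ = ∫⁻ ω, ‖(μ[D|m]) ω‖₊ * h ω ∂μ := by
        rw [hν₂, lintegral_withDensity_eq_lintegral_mul₀ hZm hhm.aemeasurable]; rfl

lemma measurable_ennnorm_of {Ω : Type*} {m : MeasurableSpace Ω} {f : Ω → ℝ}
    (hf : Measurable[m] f) : Measurable[m] fun ω => (‖f ω‖₊ : ℝ≥0∞) :=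
  hf.enorm

lemma stmt6_aux {Ω : Type*} {m : MeasurableSpace Ω} [inst : MeasurableSpace Ω]
    (μ : Measure Ω) [IsProbabilityMeasure μ] (hm : m ≤ inst)
    (X : Ω → ℝ) (hXmeas : Measurable[m] X) (hXint : Integrable X μ)
    (D : Ω → ℝ) (hDmeas : Measurable D) (hDnn : ∀ ω, 0 ≤ D ω) (hDle : ∀ ω, D ω ≤ 1)
    (Z : Ω → ℝ) (hZ : Z = μ[D|m])
    (hZpos : ∀ᵐ ω ∂μ, 0 < Z ω) :
    (∀ᵐ ω ∂μ, 0 < (μ[D | MeasurableSpace.comap Z inferInstance]) ω →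
        (μ[(fun ω' => D ω' * X ω') | MeasurableSpace.comap Z inferInstance]) ω /
          (μ[D | MeasurableSpace.comap Z inferInstance]) ω =
        (μ[X | MeasurableSpace.comap Z inferInstance]) ω) ∧
      ∫ ω, D ω * X ω / Z ω ∂μ = ∫ ω, X ω ∂μ := by
  have hDint : Integrable D μ := by
    refine Integrable.mono' (integrable_const 1) hDmeas.aestronglyMeasurable
      (Filter.Eventually.of_forall fun ω => ?_)
    rw [Real.norm_eq_abs, abs_of_nonneg (hDnn ω)]; exact hDle ω
  have hZsm : StronglyMeasurable[m] Z := hZ ▸ stronglyMeasurable_condExp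
  have hZmm : Measurable[m] Z := hZsm.measurable
  have hZmeas : Measurable Z := hZmm.mono hm le_rfl
  have hmZm : MeasurableSpace.comap Z inferInstance ≤ m := hZmm.comap_le
  have hmZ : MeasurableSpace.comap Z inferInstance ≤ inst := hmZm.trans hm
  have hXm : Measurable X := hXmeas.mono hm le_rfl
  have hXsm : StronglyMeasurable[m] X := hXmeas.stronglyMeasurable
  have hZnn : 0 ≤ᵐ[μ] Z := hZ ▸ condExp_nonneg (Filter.Eventually.of_forall hDnn)
  have hZle : Z ≤ᵐ[μ] fun _ => (1 : ℝ) := by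
    rw [hZ]
    have h1 : μ[D|m] ≤ᵐ[μ] μ[(fun _ => (1 : ℝ))|m] :=
      condExp_mono hDint (integrable_const 1) (Filter.Eventually.of_forall hDle)
    have h2 : μ[(fun _ => (1 : ℝ))|m] = fun _ => (1 : ℝ) := condExp_const hm 1
    rw [h2] at h1; exact h1
  have hZint : Integrable Z μ := by
    refine Integrable.mono' (integrable_const 1) hZmeas.aestronglyMeasurable ?_
    filter_upwards [hZnn, hZle] with ω h0 h1
    rw [Real.norm_eq_abs, abs_of_nonneg h0]; exact h1
  have hZmZ : Measurable[MeasurableSpace.comap Z inferInstance] Z :=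
    Measurable.of_comap_le le_rfl
  have hZXint : Integrable (fun ω => Z ω * X ω) μ := by
    refine Integrable.mono' hXint.abs (hZmeas.mul hXm).aestronglyMeasurable ?_
    filter_upwards [hZnn, hZle] with ω h0 h1
    rw [Real.norm_eq_abs, abs_mul, abs_of_nonneg h0]
    calc Z ω * |X ω| ≤ 1 * |X ω| := mul_le_mul_of_nonneg_right h1 (abs_nonneg _)
      _ = |X ω| := one_mul _
  have hXDint : Integrable (fun ω => X ω * D ω) μ := by
    refine Integrable.mono' hXint.abs (hXm.mul hDmeas).aestronglyMeasurable
      (Filter.Eventually.of_forall fun ω => ?_)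
    rw [Real.norm_eq_abs, abs_mul]
    calc |X ω| * |D ω| ≤ |X ω| * 1 :=
          mul_le_mul_of_nonneg_left (by rw [abs_of_nonneg (hDnn ω)]; exact hDle ω) (abs_nonneg _)
      _ = |X ω| := mul_one _
  have e1 : μ[(fun ω => X ω * D ω)|m] =ᵐ[μ] fun ω => X ω * Z ω := by
    have h := condExp_mul_of_stronglyMeasurable_left (μ := μ) hXsm hXDint hDint
    rw [hZ]; exact h
  have e2 : μ[(fun ω' => D ω' * X ω') | MeasurableSpace.comap Z inferInstance] =ᵐ[μ]
      fun ω => Z ω * (μ[X | MeasurableSpace.comap Z inferInstance]) ω := by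
    have t1 : μ[(fun ω' => D ω' * X ω') | MeasurableSpace.comap Z inferInstance] =ᵐ[μ]
        μ[(fun ω => X ω * D ω) | MeasurableSpace.comap Z inferInstance] :=
      condExp_congr_ae (Filter.Eventually.of_forall fun ω => mul_comm _ _)
    have t2 : μ[(fun ω => X ω * D ω) | MeasurableSpace.comap Z inferInstance] =ᵐ[μ]
        μ[μ[(fun ω => X ω * D ω)|m] | MeasurableSpace.comap Z inferInstance] :=
      (condExp_condExp_of_le hmZm hm).symm
    have t3 : μ[μ[(fun ω => X ω * D ω)|m] | MeasurableSpace.comap Z inferInstance] =ᵐ[μ]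
        μ[(fun ω => Z ω * X ω) | MeasurableSpace.comap Z inferInstance] :=
      condExp_congr_ae (e1.trans (Filter.Eventually.of_forall fun ω => mul_comm _ _))
    have t4 : μ[(fun ω => Z ω * X ω) | MeasurableSpace.comap Z inferInstance] =ᵐ[μ]
        fun ω => Z ω * (μ[X | MeasurableSpace.comap Z inferInstance]) ω :=
      condExp_mul_of_stronglyMeasurable_left hZmZ.stronglyMeasurable hZXint hXint
    exact t1.trans (t2.trans (t3.trans t4))
  have e4 : μ[D | MeasurableSpace.comap Z inferInstance] =ᵐ[μ] Z := by
    have t2 : μ[D | MeasurableSpace.comap Z inferInstance] =ᵐ[μ]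
        μ[μ[D|m] | MeasurableSpace.comap Z inferInstance] := (condExp_condExp_of_le hmZm hm).symm
    have t4 : μ[Z | MeasurableSpace.comap Z inferInstance] = Z :=
      condExp_of_stronglyMeasurable hmZ hZmZ.stronglyMeasurable hZint
    refine t2.trans ?_
    rw [← hZ, t4]
  constructor
  · filter_upwards [e2, e4] with ω h2 h4 hpos
    rw [h4] at hpos
    rw [h2, h4, mul_div_cancel_left₀ _ (ne_of_gt hpos)]
  · have hgm : Measurable[m] fun ω => X ω / Z ω := hXmeas.div hZmm
    have hg : Measurable fun ω => X ω / Z ω := hXm.div hZmeas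
    have hcalc : ∫⁻ ω, (‖(X ω / Z ω) * D ω‖₊ : ℝ≥0∞) ∂μ = ∫⁻ ω, (‖X ω‖₊ : ℝ≥0∞) ∂μ := by
      calc ∫⁻ ω, (‖(X ω / Z ω) * D ω‖₊ : ℝ≥0∞) ∂μ
          = ∫⁻ ω, (‖D ω‖₊ : ℝ≥0∞) * ‖X ω / Z ω‖₊ ∂μ :=
            lintegral_congr fun ω => by rw [nnnorm_mul, ENNReal.coe_mul, mul_comm]
        _ = ∫⁻ ω, (‖Z ω‖₊ : ℝ≥0∞) * ‖X ω / Z ω‖₊ ∂μ := by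
            have h := key_lintegral μ hm hDint (Filter.Eventually.of_forall hDnn)
              (h := fun ω => (‖X ω / Z ω‖₊ : ℝ≥0∞)) (measurable_ennnorm_of hgm)
            rw [← hZ] at h; exact h
        _ = ∫⁻ ω, (‖X ω‖₊ : ℝ≥0∞) ∂μ := by
            refine lintegral_congr_ae ?_
            filter_upwards [hZpos] with ω h0
            rw [← ENNReal.coe_mul, ← nnnorm_mul, mul_comm, div_mul_cancel₀ _ (ne_of_gt h0)]
    have hgDint : Integrable (fun ω => (X ω / Z ω) * D ω) μ := by
      refine ⟨(hg.mul hDmeas).aestronglyMeasurable, ?_⟩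
      show ∫⁻ ω, (‖(X ω / Z ω) * D ω‖₊ : ℝ≥0∞) ∂μ < ⊤
      rw [hcalc]
      exact hXint.2
    have emul : μ[(fun ω => (X ω / Z ω) * D ω)|m] =ᵐ[μ] fun ω => (X ω / Z ω) * Z ω := by
      have h := condExp_mul_of_stronglyMeasurable_left (μ := μ) hgm.stronglyMeasurable hgDint hDint
      rw [← hZ] at h; exact h
    calc ∫ ω, D ω * X ω / Z ω ∂μ = ∫ ω, (X ω / Z ω) * D ω ∂μ :=
          integral_congr_ae (Filter.Eventually.of_forall fun ω => by ring)
      _ = ∫ ω, (μ[(fun ω => (X ω / Z ω) * D ω)|m]) ω ∂μ := (integral_condExp hm).symm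
      _ = ∫ ω, (X ω / Z ω) * Z ω ∂μ := integral_congr_ae emul
      _ = ∫ ω, X ω ∂μ := by
          refine integral_congr_ae ?_
          filter_upwards [hZpos] with ω h0
          exact div_mul_cancel₀ _ (ne_of_gt h0)

/-- if `Z = p(w|X_full)`, `D(w) ⫫ X | Z` and `Z > 0` a.s., then
`E[X | W = w, Z] = E[X | Z]` a.s. (on `{E[D(w)|Z] > 0}`, with the treated conditional
mean defined as `E[D(w)X|Z]/E[D(w)|Z]`), and consequently `E[D(w) X / Z] = E[X]`. -/
theorem stmt6 {Ω : Type*} [MeasurableSpace Ω] (μ : Measure Ω) [IsProbabilityMeasure μ]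
    {d T : ℕ} (Xfull : Ω → (Fin d → ℝ)) (W : Ω → Fin T)
    (hXfull : Measurable Xfull) (hW : Measurable W) (w : Fin T)
    (X : Ω → ℝ)
    (hXmeas : @Measurable Ω ℝ (MeasurableSpace.comap Xfull inferInstance) _ X)
    (hX2 : MemLp X 2 μ)
    (D : Ω → ℝ) (hD : D = fun ω => if W ω = w then (1 : ℝ) else 0)
    (Z : Ω → ℝ) (hZ : Z = μ[D | MeasurableSpace.comap Xfull inferInstance])
    (hZpos : ∀ᵐ ω ∂μ, 0 < Z ω)
    (ci : CondIndepC μ D X Z) :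
    (∀ᵐ ω ∂μ, 0 < (μ[D | MeasurableSpace.comap Z inferInstance]) ω →
        (μ[(fun ω' => D ω' * X ω') | MeasurableSpace.comap Z inferInstance]) ω /
          (μ[D | MeasurableSpace.comap Z inferInstance]) ω =
        (μ[X | MeasurableSpace.comap Z inferInstance]) ω) ∧
      ∫ ω, D ω * X ω / Z ω ∂μ = ∫ ω, X ω ∂μ := by
  have hDmeas : Measurable D := by
    rw [hD]
    exact Measurable.ite (hW (measurableSet_singleton w)) measurable_const measurable_const
  have hDnn : ∀ ω, 0 ≤ D ω := fun ω => by rw [hD]; dsimp only; split <;> norm_num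
  have hDle : ∀ ω, D ω ≤ 1 := fun ω => by rw [hD]; dsimp only; split <;> norm_num
  exact stmt6_aux μ hXfull.comap_le X hXmeas (hX2.integrable one_le_two) D hDmeas hDnn hDle
    Z hZ hZpos
end

section
/- Pairwise ATE identification: under overlap and weak unconfoundedness given the GPS for both levels w and w′, the pairwise average treatment effect satisfies τ(w, w′) = E[Y(w′) − Y(w)] = E[E[Y | W = w′, p(w′|X)]] − E[E[Y | W = w, p(w|X)]], where Y = Y(W). -/
open MeasureTheory ProbabilityTheory Filter

lemma gn_tendsto (y : ℝ) :
    Tendsto (fun n : ℕ => max (-(n : ℝ)) (min (n : ℝ) y)) atTop (nhds y) := by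
  apply tendsto_atTop_of_eventually_const (i₀ := ⌈|y|⌉₊)
  intro n hn
  have h1 : |y| ≤ (n : ℝ) := le_trans (Nat.le_ceil _) (by exact_mod_cast hn)
  rw [min_eq_right (le_trans (le_abs_self y) h1),
    max_eq_right (le_trans (neg_le_neg h1) (neg_abs_le y))]

lemma gn_abs_le (n : ℕ) (y : ℝ) : |max (-(n : ℝ)) (min (n : ℝ) y)| ≤ |y| := by
  have hn : (0 : ℝ) ≤ n := n.cast_nonneg
  rw [abs_le]
  constructor
  · exact le_trans (le_min (by linarith [abs_nonneg y]) (neg_abs_le y)) (le_max_right _ _)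
  · exact max_le (by linarith [abs_nonneg y]) (le_trans (min_le_right _ _) (le_abs_self y))

lemma gn_abs_le' (n : ℕ) (y : ℝ) : |max (-(n : ℝ)) (min (n : ℝ) y)| ≤ n := by
  have hn : (0 : ℝ) ≤ n := n.cast_nonneg
  rw [abs_le]
  exact ⟨le_max_left _ _, max_le (by linarith) (min_le_left _ _)⟩

abbrev mOf {Ω : Type*} [MeasurableSpace Ω] (pv : Ω → ℝ) : MeasurableSpace Ω :=
  MeasurableSpace.comap pv inferInstance

lemma aux_key {Ω : Type*} [m0 : MeasurableSpace Ω] (μ : Measure Ω) [IsProbabilityMeasure μ]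
    (Dv Yv : Ω → ℝ) (hDmeas : Measurable Dv)
    (hD0 : ∀ ω, 0 ≤ Dv ω) (hD1 : ∀ ω, Dv ω ≤ 1)
    (hYm : Measurable Yv) (hYint : Integrable Yv μ)
    (pv : Ω → ℝ) (hpv_meas : Measurable pv)
    (hED : μ[Dv | MeasurableSpace.comap pv inferInstance] =ᵐ[μ] pv)
    (hp0 : ∀ᵐ ω ∂μ, 0 ≤ pv ω) (hp1 : ∀ᵐ ω ∂μ, pv ω ≤ 1)
    (hpos : ∀ᵐ ω ∂μ, 0 < pv ω)
    (indep : CondIndepC μ Dv Yv pv) :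
    ∫ ω, (μ[(fun ω' => Dv ω' * Yv ω') | MeasurableSpace.comap pv inferInstance]) ω /
        (μ[Dv | MeasurableSpace.comap pv inferInstance]) ω ∂μ = ∫ ω, Yv ω ∂μ := by
  have hm : mOf pv ≤ m0 := hpv_meas.comap_le
  have hpv_m : Measurable[mOf pv] pv := Measurable.of_comap_le le_rfl
  -- truncations
  set g : ℕ → ℝ → ℝ := fun n y => max (-(n : ℝ)) (min (n : ℝ) y) with hg_def
  have hg_meas : ∀ n, Measurable (g n) := fun n =>
    measurable_const.max (measurable_const.min measurable_id)
  have hgY_int : ∀ n, Integrable (fun ω => g n (Yv ω)) μ := by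
    intro n
    refine (integrable_const (n : ℝ)).mono' ((hg_meas n).comp hYm).aestronglyMeasurable ?_
    filter_upwards with ω
    exact gn_abs_le' n (Yv ω)
  have hDgY_int : ∀ n, Integrable (fun ω => Dv ω * g n (Yv ω)) μ := by
    intro n
    refine (integrable_const (n : ℝ)).mono'
      (hDmeas.mul ((hg_meas n).comp hYm)).aestronglyMeasurable ?_
    filter_upwards with ω
    rw [Real.norm_eq_abs, abs_mul]
    calc |Dv ω| * |g n (Yv ω)| ≤ 1 * (n : ℝ) := by
          apply mul_le_mul (by rw [abs_of_nonneg (hD0 ω)]; exact hD1 ω)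
            (gn_abs_le' n (Yv ω)) (abs_nonneg _) one_pos.le
      _ = (n : ℝ) := one_mul _
  have hf0D : ∀ ω, max 0 (min 1 (Dv ω)) = Dv ω := by
    intro ω; rw [min_eq_right (hD1 ω), max_eq_right (hD0 ω)]
  -- product identity with truncation
  have hprod : ∀ n : ℕ,
      μ[(fun ω => Dv ω * g n (Yv ω)) | mOf pv] =ᵐ[μ]
        fun ω => pv ω * (μ[(fun ω' => g n (Yv ω')) | mOf pv]) ω := by
    intro n
    have h := indep (fun x => max 0 (min 1 x)) (g n)
      (measurable_const.max (measurable_const.min measurable_id)) (hg_meas n)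
      ⟨1, fun x => by
        rw [abs_le]
        exact ⟨le_trans (by norm_num) (le_max_left _ _),
          max_le one_pos.le (min_le_left _ _)⟩⟩
      ⟨n, fun x => gn_abs_le' n x⟩
    have he1 : (fun ω => max 0 (min 1 (Dv ω)) * g n (Yv ω))
        = fun ω => Dv ω * g n (Yv ω) := by
      funext ω; rw [hf0D ω]
    have he2 : (fun ω' => max 0 (min 1 (Dv ω'))) = Dv := by funext ω; exact hf0D ω
    rw [he1, he2] at h
    refine h.trans ?_
    filter_upwards [hED] with ω hω
    rw [hω]
  -- integrabilities
  have hDYint : Integrable (fun ω => Dv ω * Yv ω) μ := by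
    refine hYint.abs.mono' (hDmeas.mul hYm).aestronglyMeasurable ?_
    filter_upwards with ω
    rw [Real.norm_eq_abs, abs_mul]
    calc |Dv ω| * |Yv ω| ≤ 1 * |Yv ω| := by
          apply mul_le_mul_of_nonneg_right
            (by rw [abs_of_nonneg (hD0 ω)]; exact hD1 ω) (abs_nonneg _)
      _ = |Yv ω| := one_mul _
  have hGint : Integrable (fun ω => pv ω * (μ[Yv | mOf pv]) ω) μ := by
    refine (integrable_condExp (f := Yv) (m := mOf pv)).abs.mono'
      ((hpv_m.mono hm le_rfl).mul
        (stronglyMeasurable_condExp.mono hm).measurable).aestronglyMeasurable ?_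
    filter_upwards [hp0, hp1] with ω h0 h1
    rw [Real.norm_eq_abs, abs_mul]
    calc |pv ω| * |(μ[Yv | mOf pv]) ω| ≤ 1 * |(μ[Yv | mOf pv]) ω| := by
          apply mul_le_mul_of_nonneg_right (by rw [abs_of_nonneg h0]; exact h1) (abs_nonneg _)
      _ = |(μ[Yv | mOf pv]) ω| := one_mul _
  -- bound tendsto 0
  have hbnd : Tendsto (fun n => ∫ ω, |g n (Yv ω) - Yv ω| ∂μ) atTop (nhds 0) := by
    have h0 : (0 : ℝ) = ∫ (_ : Ω), (0 : ℝ) ∂μ := by simp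
    rw [h0]
    apply tendsto_integral_of_dominated_convergence (fun ω => 2 * |Yv ω|)
    · intro n
      exact (((hg_meas n).comp hYm).sub hYm).abs.aestronglyMeasurable
    · exact hYint.abs.const_mul 2
    · intro n
      filter_upwards with ω
      rw [Real.norm_eq_abs, abs_abs]
      calc |g n (Yv ω) - Yv ω| ≤ |g n (Yv ω)| + |Yv ω| := abs_sub _ _
        _ ≤ |Yv ω| + |Yv ω| := by linarith [gn_abs_le n (Yv ω)]
        _ = 2 * |Yv ω| := by ring
    · filter_upwards with ω
      have h := ((gn_tendsto (Yv ω)).sub (tendsto_const_nhds (x := Yv ω))).abs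
      simpa using h
  -- key identity
  have hkey : (fun ω => pv ω * (μ[Yv | mOf pv]) ω) =ᵐ[μ] μ[(fun ω => Dv ω * Yv ω) | mOf pv] := by
    refine ae_eq_condExp_of_forall_setIntegral_eq hm hDYint
      (fun s _ _ => hGint.integrableOn) (fun s hs hμs => ?_)
      ((hpv_m.stronglyMeasurable.mul stronglyMeasurable_condExp).aestronglyMeasurable)
    -- both sides are limits of ∫_s Dv * g n (Yv)
    have hsm : MeasurableSet[m0] s := hm s hs
    have hA : Tendsto (fun n => ∫ ω in s, Dv ω * g n (Yv ω) ∂μ) atTop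
        (nhds (∫ ω in s, Dv ω * Yv ω ∂μ)) := by
      apply tendsto_integral_of_dominated_convergence (fun ω => |Yv ω|)
      · intro n
        exact (hDmeas.mul ((hg_meas n).comp hYm)).aestronglyMeasurable.restrict
      · exact hYint.abs.restrict
      · intro n
        filter_upwards with ω
        rw [Real.norm_eq_abs, abs_mul]
        calc |Dv ω| * |g n (Yv ω)| ≤ 1 * |Yv ω| :=
              mul_le_mul (by rw [abs_of_nonneg (hD0 ω)]; exact hD1 ω)
                (gn_abs_le n (Yv ω)) (abs_nonneg _) one_pos.le
          _ = |Yv ω| := one_mul _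
      · filter_upwards with ω
        exact (gn_tendsto (Yv ω)).const_mul (Dv ω)
    have hIn : ∀ n, ∫ ω in s, Dv ω * g n (Yv ω) ∂μ
        = ∫ ω in s, pv ω * (μ[(fun ω' => g n (Yv ω')) | mOf pv]) ω ∂μ := by
      intro n
      rw [← setIntegral_condExp hm (hDgY_int n) hs]
      exact setIntegral_congr_ae hsm ((hprod n).mono fun ω h _ => h)
    have hB : Tendsto (fun n => ∫ ω in s, pv ω * (μ[(fun ω' => g n (Yv ω')) | mOf pv]) ω ∂μ)
        atTop (nhds (∫ ω in s, pv ω * (μ[Yv | mOf pv]) ω ∂μ)) := by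
      rw [tendsto_iff_dist_tendsto_zero]
      apply squeeze_zero (fun n => dist_nonneg)
        (g := fun n => ∫ ω, |g n (Yv ω) - Yv ω| ∂μ) _ hbnd
      intro n
      have hGn_int : Integrable (fun ω => pv ω * (μ[(fun ω' => g n (Yv ω')) | mOf pv]) ω) μ := by
        refine (integrable_condExp (f := fun ω' => g n (Yv ω')) (m := mOf pv)).abs.mono'
          ((hpv_m.mono hm le_rfl).mul
            (stronglyMeasurable_condExp.mono hm).measurable).aestronglyMeasurable ?_
        filter_upwards [hp0, hp1] with ω h0 h1
        rw [Real.norm_eq_abs, abs_mul]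
        calc |pv ω| * _ ≤ 1 * |(μ[(fun ω' => g n (Yv ω')) | mOf pv]) ω| :=
              mul_le_mul_of_nonneg_right (by rw [abs_of_nonneg h0]; exact h1) (abs_nonneg _)
          _ = _ := one_mul _
      have hsub : μ[(fun ω' => g n (Yv ω')) | mOf pv] - μ[Yv | mOf pv]
          =ᵐ[μ] μ[(fun ω' => g n (Yv ω') - Yv ω') | mOf pv] := (condExp_sub (hgY_int n) hYint (mOf pv)).symm
      have hEdiff_int : Integrable (fun ω =>
          (μ[(fun ω' => g n (Yv ω')) | mOf pv]) ω - (μ[Yv | mOf pv]) ω) μ :=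
        integrable_condExp.sub integrable_condExp
      rw [Real.dist_eq, ← integral_sub hGn_int.restrict hGint.restrict]
      calc |∫ ω in s, (pv ω * (μ[(fun ω' => g n (Yv ω')) | mOf pv]) ω
              - pv ω * (μ[Yv | mOf pv]) ω) ∂μ|
          ≤ ∫ ω in s, |pv ω * (μ[(fun ω' => g n (Yv ω')) | mOf pv]) ω
              - pv ω * (μ[Yv | mOf pv]) ω| ∂μ := by
            simpa using norm_integral_le_integral_norm (μ := μ.restrict s)
              (fun ω => pv ω * (μ[(fun ω' => g n (Yv ω')) | mOf pv]) ω
                - pv ω * (μ[Yv | mOf pv]) ω)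
        _ ≤ ∫ ω in s, |(μ[(fun ω' => g n (Yv ω')) | mOf pv]) ω - (μ[Yv | mOf pv]) ω| ∂μ := by
            apply integral_mono_ae ((hGn_int.sub hGint).abs.restrict)
              (hEdiff_int.abs.restrict)
            filter_upwards [ae_restrict_of_ae hp0, ae_restrict_of_ae hp1] with ω h0 h1
            simp only [Pi.sub_apply]
            rw [← mul_sub, abs_mul]
            calc |pv ω| * _ ≤ 1 * |(μ[(fun ω' => g n (Yv ω')) | mOf pv]) ω - (μ[Yv | mOf pv]) ω| :=
                  mul_le_mul_of_nonneg_right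
                    (by rw [abs_of_nonneg h0]; exact h1) (abs_nonneg _)
              _ = _ := one_mul _
        _ ≤ ∫ ω, |(μ[(fun ω' => g n (Yv ω')) | mOf pv]) ω - (μ[Yv | mOf pv]) ω| ∂μ :=
            setIntegral_le_integral hEdiff_int.abs
              (Filter.Eventually.of_forall fun ω => abs_nonneg _)
        _ = ∫ ω, |(μ[(fun ω' => g n (Yv ω') - Yv ω') | mOf pv]) ω| ∂μ := by
            apply integral_congr_ae
            filter_upwards [hsub] with ω hω
            rw [← Pi.sub_apply, hω]
        _ ≤ ∫ ω, |g n (Yv ω) - Yv ω| ∂μ := integral_abs_condExp_le _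
    simp only [hIn] at hA
    exact tendsto_nhds_unique hB hA
  -- conclude
  have hfinal : (fun ω => (μ[(fun ω' => Dv ω' * Yv ω') | mOf pv]) ω / (μ[Dv | mOf pv]) ω)
      =ᵐ[μ] fun ω => (μ[Yv | mOf pv]) ω := by
    filter_upwards [hkey, hED, hpos] with ω h1 h2 h3
    rw [← h1, h2]
    exact mul_div_cancel_left₀ _ (ne_of_gt h3)
  rw [integral_congr_ae hfinal, integral_condExp hm]

/-- pairwise ATE identification: under overlap and weak unconfoundedness
given the GPS at both levels, `τ(w,w′) = E[Y(w′)] − E[Y(w)]` equals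
`E[E[Y|W=w′,p(w′|X)]] − E[E[Y|W=w,p(w|X)]]`, with `E[Y|W=w,Z] = E[D(w)Y|σ(Z)]/E[D(w)|σ(Z)]`. -/
theorem stmt15 {Ω : Type*} [MeasurableSpace Ω] (μ : Measure Ω) [IsProbabilityMeasure μ]
    {d T : ℕ} (X : Ω → (Fin d → ℝ)) (W : Ω → Fin T) (Y : Fin T → Ω → ℝ)
    (hX : Measurable X) (hW : Measurable W) (hYm : ∀ v, Measurable (Y v))
    (hYint : ∀ v, Integrable (Y v) μ)
    (Yobs : Ω → ℝ) (hYobs : Yobs = fun ω => Y (W ω) ω)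
    (w w' : Fin T)
    (D : Fin T → Ω → ℝ) (hD : ∀ v, D v = fun ω => if W ω = v then (1 : ℝ) else 0)
    (p : Fin T → Ω → ℝ)
    (hp : ∀ v, p v = μ[D v | MeasurableSpace.comap X inferInstance])
    (overlap : ∀ v, ∀ᵐ ω ∂μ, 0 < p v ω)
    (unconf : ∀ v, CondIndepC μ (D v) (Y v) (p v))
    (τ : ℝ) (hτ : τ = ∫ ω, Y w' ω ∂μ - ∫ ω, Y w ω ∂μ) :
    τ =
      (∫ ω, (μ[(fun ω' => D w' ω' * Yobs ω') | MeasurableSpace.comap (p w') inferInstance]) ω /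
            (μ[D w' | MeasurableSpace.comap (p w') inferInstance]) ω ∂μ) -
      (∫ ω, (μ[(fun ω' => D w ω' * Yobs ω') | MeasurableSpace.comap (p w) inferInstance]) ω /
            (μ[D w | MeasurableSpace.comap (p w) inferInstance]) ω ∂μ) := by
  have hmX : MeasurableSpace.comap X inferInstance ≤ (inferInstance : MeasurableSpace Ω) :=
    hX.comap_le
  have hDmeas : ∀ v, Measurable (D v) := by
    intro v
    rw [hD v]
    exact Measurable.ite (hW (measurableSet_singleton v)) measurable_const measurable_const
  have hD0 : ∀ v ω, 0 ≤ D v ω := by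
    intro v ω; rw [hD v]; dsimp only; split_ifs <;> norm_num
  have hD1 : ∀ v ω, D v ω ≤ 1 := by
    intro v ω; rw [hD v]; dsimp only; split_ifs <;> norm_num
  have hDint : ∀ v, Integrable (D v) μ := by
    intro v
    refine (integrable_const (1 : ℝ)).mono' (hDmeas v).aestronglyMeasurable ?_
    filter_upwards with ω
    rw [Real.norm_eq_abs, abs_of_nonneg (hD0 v ω)]; exact hD1 v ω
  have hpv_mX : ∀ v, Measurable[MeasurableSpace.comap X inferInstance] (p v) := by
    intro v; rw [hp v]; exact stronglyMeasurable_condExp.measurable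
  have hpv_meas : ∀ v, Measurable (p v) := fun v => (hpv_mX v).mono hmX le_rfl
  have hED : ∀ v, μ[D v | MeasurableSpace.comap (p v) inferInstance] =ᵐ[μ] p v := by
    intro v
    have hm_mX : MeasurableSpace.comap (p v) inferInstance
        ≤ MeasurableSpace.comap X inferInstance := (hpv_mX v).comap_le
    have hm := hm_mX.trans hmX
    have h1 := condExp_condExp_of_le (μ := μ) (f := D v) hm_mX hmX
    have h2 : μ[p v | MeasurableSpace.comap (p v) inferInstance] = p v :=
      condExp_of_stronglyMeasurable hm
        (Measurable.stronglyMeasurable (Measurable.of_comap_le le_rfl))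
        (hp v ▸ integrable_condExp)
    calc μ[D v | MeasurableSpace.comap (p v) inferInstance]
        =ᵐ[μ] μ[μ[D v | MeasurableSpace.comap X inferInstance]
            | MeasurableSpace.comap (p v) inferInstance] := h1.symm
      _ = μ[p v | MeasurableSpace.comap (p v) inferInstance] := by rw [hp v]
      _ = p v := h2
  have hp0 : ∀ v, ∀ᵐ ω ∂μ, 0 ≤ p v ω := by
    intro v; rw [hp v]; exact condExp_nonneg (Filter.Eventually.of_forall (hD0 v))
  have hp1 : ∀ v, ∀ᵐ ω ∂μ, p v ω ≤ 1 := by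
    intro v
    have h := condExp_mono (μ := μ) (m := MeasurableSpace.comap X inferInstance)
      (hDint v) (integrable_const (1 : ℝ)) (Filter.Eventually.of_forall (hD1 v))
    rw [condExp_const hmX] at h
    rw [hp v]; exact h
  have hDY : ∀ v, (fun ω' => D v ω' * Yobs ω') = fun ω' => D v ω' * Y v ω' := by
    intro v
    funext ω
    rw [hD v, hYobs]
    dsimp only
    by_cases h : W ω = v
    · rw [h]
    · simp [h]
  have haux : ∀ v, ∫ ω,
      (μ[(fun ω' => D v ω' * Y v ω') | MeasurableSpace.comap (p v) inferInstance]) ω /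
        (μ[D v | MeasurableSpace.comap (p v) inferInstance]) ω ∂μ = ∫ ω, Y v ω ∂μ :=
    fun v => aux_key μ (D v) (Y v) (hDmeas v) (hD0 v) (hD1 v) (hYm v) (hYint v)
      (p v) (hpv_meas v) (hED v) (hp0 v) (hp1 v) (overlap v) (unconf v)
  rw [hτ]
  rw [hDY w]
  rw [hDY w']
  rw [haux w]
  rw [haux w']
end
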